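/- arXiv:1406.0747 — 2 statements merged into one kernel-verified Lean document; each statement's English description precedes it below -/
import Mathlib

section
/- Let (X, μ) be a measure space, 2 ≤ p < ∞, and suppose nonnegative measurable functions g, u, h, d satisfy ∫ g^p dμ ≤ (p-2) ∫ u·h·g^{p-2} dμ + ∫ u·d·g^{p-2} dμ with all integrals finite. Then there exist constants C_p, D_p > 0 depending only on p such that for every ε > 0, ∫ g^p dμ ≤ ε^{-2} C_p ∫ u^p dμ + ε² D_p (∫ h^p dμ + ∫ d^p dμ). -/
/-!
Pointwise, Young's inequality with exponents `p/2` and `p/(p-2)` splits `u h g^(p-2)` into a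
multiple of `(u h)^(p/2) ≤ (ε⁻² u^p + ε² h^p)/2` plus `t g^p`. Integrating and inserting this
into the hypothesis bounds `∫ g^p` by the desired right-hand side plus `(p-1) t ∫ g^p`; choosing
`t = 1/(2(p-1))` this last term is `½ ∫ g^p`, which is finite and is absorbed into the left.
-/

open MeasureTheory

namespace Real

theorem mul_rpow_sub_two_le {p a b t : ℝ} (hp : 2 ≤ p) (ha : 0 ≤ a) (hb : 0 ≤ b) (ht : 0 < t) :
    a * b ^ (p - 2) ≤ t ^ (1 - p / 2) * a ^ (p / 2) + t * b ^ p := by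
  have hp0 : 0 < p := by linarith
  have hw₁ : 2 / p ≤ 1 := (div_le_one hp0).2 hp
  -- weighted AM-GM with weights `2/p`, `1 - 2/p`; the exponent of `t` makes its powers cancel
  have hx : 0 ≤ t ^ (1 - p / 2) * a ^ (p / 2) := by positivity
  have hy : 0 ≤ t * b ^ p := by positivity
  have hgm := geom_mean_le_arith_mean2_weighted (by positivity) (sub_nonneg.2 hw₁) hx hy
    (add_sub_cancel (2 / p) 1)
  have hprod : (t ^ (1 - p / 2) * a ^ (p / 2)) ^ (2 / p) * (t * b ^ p) ^ (1 - 2 / p) =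
      a * b ^ (p - 2) := by
    rw [mul_rpow (by positivity) (by positivity), mul_rpow ht.le (by positivity),
      ← rpow_mul ht.le, ← rpow_mul ha, ← rpow_mul hb,
      show (1 - p / 2) * (2 / p) = -(1 - 2 / p) by field_simp; ring,
      show p / 2 * (2 / p) = 1 by field_simp, show p * (1 - 2 / p) = p - 2 by field_simp,
      rpow_one, rpow_neg ht.le]
    field_simp
  rw [hprod] at hgm
  have hy' : 0 ≤ 2 / p * (t * b ^ p) := by positivity
  linarith [mul_le_mul_of_nonneg_right hw₁ hx]

theorem mul_rpow_half_le {p u h r : ℝ} (hu : 0 ≤ u) (hh : 0 ≤ h) (hr : 0 < r) :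
    (u * h) ^ (p / 2) ≤ (r⁻¹ * u ^ p + r * h ^ p) / 2 := by
  have hsq {v : ℝ} (hv : 0 ≤ v) : v ^ p = (v ^ (p / 2)) ^ 2 := by
    rw [← rpow_two, ← rpow_mul hv, div_mul_cancel₀ p two_ne_zero]
  rw [mul_rpow hu hh, hsq hu, hsq hh]
  set x := u ^ (p / 2)
  set y := h ^ (p / 2)
  have hgap : 0 ≤ r⁻¹ * (x - r * y) ^ 2 := by positivity
  have hexpand : r⁻¹ * (x - r * y) ^ 2 = r⁻¹ * x ^ 2 + r * y ^ 2 - 2 * (x * y) := by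
    field_simp
    ring
  linarith

theorem mul_mul_rpow_sub_two_le {p t r u h g : ℝ} (hp : 2 ≤ p) (ht : 0 < t) (hr : 0 < r)
    (hu : 0 ≤ u) (hh : 0 ≤ h) (hg : 0 ≤ g) :
    u * h * g ^ (p - 2) ≤ t ^ (1 - p / 2) / 2 * (r⁻¹ * u ^ p + r * h ^ p) + t * g ^ p := by
  calc u * h * g ^ (p - 2) ≤ t ^ (1 - p / 2) * (u * h) ^ (p / 2) + t * g ^ p :=
        mul_rpow_sub_two_le hp (mul_nonneg hu hh) hg ht
    _ ≤ t ^ (1 - p / 2) * ((r⁻¹ * u ^ p + r * h ^ p) / 2) + t * g ^ p := by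
        gcongr
        exact mul_rpow_half_le hu hh hr
    _ = t ^ (1 - p / 2) / 2 * (r⁻¹ * u ^ p + r * h ^ p) + t * g ^ p := by ring

end Real

theorem integral_mul_mul_rpow_sub_two_le {X : Type*} [MeasurableSpace X] {μ : Measure X}
    {p t r : ℝ} {u h g : X → ℝ} (hp : 2 ≤ p) (ht : 0 < t) (hr : 0 < r)
    (hu : ∀ x, 0 ≤ u x) (hh : ∀ x, 0 ≤ h x) (hg : ∀ x, 0 ≤ g x)
    (iu : Integrable (fun x => u x ^ p) μ) (ih : Integrable (fun x => h x ^ p) μ)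
    (ig : Integrable (fun x => g x ^ p) μ)
    (iuhg : Integrable (fun x => u x * h x * g x ^ (p - 2)) μ) :
    ∫ x, u x * h x * g x ^ (p - 2) ∂μ ≤
      t ^ (1 - p / 2) / 2 * (r⁻¹ * ∫ x, u x ^ p ∂μ + r * ∫ x, h x ^ p ∂μ) +
        t * ∫ x, g x ^ p ∂μ := by
  have iu' := iu.const_mul r⁻¹
  have ih' := ih.const_mul r
  have iuh : Integrable (fun x => t ^ (1 - p / 2) / 2 * (r⁻¹ * u x ^ p + r * h x ^ p)) μ :=
    (iu'.add ih').const_mul _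
  have ig' := ig.const_mul t
  calc ∫ x, u x * h x * g x ^ (p - 2) ∂μ
      ≤ ∫ x, t ^ (1 - p / 2) / 2 * (r⁻¹ * u x ^ p + r * h x ^ p) + t * g x ^ p ∂μ :=
        integral_mono iuhg (iuh.add ig') fun x =>
          Real.mul_mul_rpow_sub_two_le hp ht hr (hu x) (hh x) (hg x)
    _ = _ := by
        rw [integral_add iuh ig', integral_const_mul, integral_add iu' ih', integral_const_mul,
          integral_const_mul, integral_const_mul]

theorem le_of_absorb_half {p G I J U H D K r : ℝ} (hp : 2 ≤ p) (hK : 0 ≤ K)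
    (hr : 0 < r) (hH : 0 ≤ H) (hD : 0 ≤ D) (hG : G ≤ (p - 2) * I + J)
    (hI : I ≤ K / 2 * (r⁻¹ * U + r * H) + (2 * (p - 1))⁻¹ * G)
    (hJ : J ≤ K / 2 * (r⁻¹ * U + r * D) + (2 * (p - 1))⁻¹ * G) :
    G ≤ (p - 1) * K * (r⁻¹ * U + r * (H + D)) := by
  have hp1 : 0 < p - 1 := by linarith
  have hsum : (p - 2) * I + J ≤
      (p - 1) * (K / 2 * r⁻¹ * U) + K / 2 * r * ((p - 2) * H + D) + G / 2 := by
    have := mul_le_mul_of_nonneg_left hI (by linarith : 0 ≤ p - 2)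
    have hhalf : (p - 2) * ((2 * (p - 1))⁻¹ * G) + (2 * (p - 1))⁻¹ * G = G / 2 := by
      field_simp
      ring
    linarith
  have hHD : K * r * ((p - 2) * H + D) ≤ K * r * ((p - 1) * (H + D)) := by
    have : 0 ≤ K * r := by positivity
    gcongr
    nlinarith
  linarith

/-- Abstract key step of the `Lᵖ`-interpolation inequality: if `2 ≤ p < ∞` then there
are constants `C_p, D_p > 0` depending only on `p` such that, whenever nonnegative
measurable functions `g, u, h, d` on a measure space `(X, μ)` with finite `p`-integrals
satisfy `∫ g^p ≤ (p-2) ∫ u·h·g^{p-2} + ∫ u·d·g^{p-2}` (all integrals finite), one has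
`∫ g^p ≤ ε⁻² C_p ∫ u^p + ε² D_p (∫ h^p + ∫ d^p)` for every `ε > 0`. -/
theorem abstract_interpolation_step (p : ℝ) (hp : 2 ≤ p) :
    ∃ Cp Dp : ℝ, 0 < Cp ∧ 0 < Dp ∧
      ∀ {X : Type} [MeasurableSpace X] (μ : Measure X) (g u h d : X → ℝ),
        Measurable g → Measurable u → Measurable h → Measurable d →
        (∀ x, 0 ≤ g x) → (∀ x, 0 ≤ u x) → (∀ x, 0 ≤ h x) → (∀ x, 0 ≤ d x) →
        Integrable (fun x => g x ^ p) μ →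
        Integrable (fun x => u x ^ p) μ →
        Integrable (fun x => h x ^ p) μ →
        Integrable (fun x => d x ^ p) μ →
        Integrable (fun x => u x * h x * g x ^ (p - 2)) μ →
        Integrable (fun x => u x * d x * g x ^ (p - 2)) μ →
        (∫ x, g x ^ p ∂μ) ≤
            (p - 2) * ∫ x, u x * h x * g x ^ (p - 2) ∂μ +
              ∫ x, u x * d x * g x ^ (p - 2) ∂μ →
        ∀ ε : ℝ, 0 < ε →
          (∫ x, g x ^ p ∂μ) ≤
            ε⁻¹ ^ 2 * Cp * ∫ x, u x ^ p ∂μ +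
              ε ^ 2 * Dp * ((∫ x, h x ^ p ∂μ) + ∫ x, d x ^ p ∂μ) := by
  have ht : 0 < (2 * (p - 1))⁻¹ := by
    have : 0 < p - 1 := by linarith
    positivity
  have hK : 0 < (2 * (p - 1))⁻¹ ^ (1 - p / 2) := Real.rpow_pos_of_pos ht _
  have hC : 0 < (p - 1) * (2 * (p - 1))⁻¹ ^ (1 - p / 2) := mul_pos (by linarith) hK
  refine ⟨_, _, hC, hC, ?_⟩
  intro X _ μ g u h d _ _ _ _ hg hu hh hd ig iu ih id iuhg iudg hG ε hε
  have hr : 0 < ε ^ 2 := by positivity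
  have hI := integral_mul_mul_rpow_sub_two_le hp ht hr hu hh hg iu ih ig iuhg
  have hJ := integral_mul_mul_rpow_sub_two_le hp ht hr hu hd hg iu id ig iudg
  have hH : 0 ≤ ∫ x, h x ^ p ∂μ := integral_nonneg fun x => Real.rpow_nonneg (hh x) p
  have hD : 0 ≤ ∫ x, d x ^ p ∂μ := integral_nonneg fun x => Real.rpow_nonneg (hd x) p
  calc (∫ x, g x ^ p ∂μ)
      ≤ _ := le_of_absorb_half hp hK.le hr hH hD hG hI hJ
    _ = _ := by rw [inv_pow]; ring
end

section
/- Let X = N × ℝ where N is a metric measure space with finite total measure μ_N(N) and ℝ carries Lebesgue measure, with product measure μ and ℓ²-product metric. If there are constants A₁ > 0 and a radius r₀ > 0 such that μ_N(B^N_r(p)) ≥ A₁ r^{m-1} for all p ∈ N and 0 < r ≤ r₀, and μ_N(B^N_r(p)) ≤ B₂ r^{m-1} for all p and 0 < r ≤ r₀, then there exists C > 0 such that μ(B^X_{tR}(x)) ≤ C t^m μ(B^X_R(x)) for all x ∈ X, R > 0 and t ≥ 1. -/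
/-!
The ℓ²-ball of radius `R` about `x` lies between the boxes `B(x₁, R/2) × B(x₂, R/2)` and
`B(x₁, R) × B(x₂, R)`, so its product measure is comparable to `μ_N(B(x₁, ·)) · R`.
Beyond the scale `r₀` the upper Ahlfors bound is replaced by the total mass, which gives
`μ_N(B(p, s)) ≤ K · min(s, r₀)^(m-1)` for all `s`; together with the lower bound at the radius
`min(R/2, r₀)` this yields the doubling constant `2^m K / A₁`.
-/

open Set Metric MeasureTheory
open scoped ENNReal

def prodL2Ball {α : Type*} [PseudoMetricSpace α] (x : α × ℝ) (R : ℝ) : Set (α × ℝ) :=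
  {y | Real.sqrt (dist x.1 y.1 ^ 2 + |x.2 - y.2| ^ 2) < R}

section Balls

variable {α : Type*} [PseudoMetricSpace α]

theorem prodL2Ball_subset_ball_prod_ball (x : α × ℝ) (R : ℝ) :
    prodL2Ball x R ⊆ ball x.1 R ×ˢ ball x.2 R := by
  rintro ⟨y₁, y₂⟩ hy
  have h₁ : dist x.1 y₁ ≤ Real.sqrt (dist x.1 y₁ ^ 2 + |x.2 - y₂| ^ 2) :=
    Real.le_sqrt_of_sq_le (le_add_of_nonneg_right (sq_nonneg _))
  have h₂ : |x.2 - y₂| ≤ Real.sqrt (dist x.1 y₁ ^ 2 + |x.2 - y₂| ^ 2) :=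
    Real.le_sqrt_of_sq_le (le_add_of_nonneg_left (sq_nonneg _))
  constructor
  · rw [mem_ball, dist_comm]
    exact h₁.trans_lt hy
  · rw [mem_ball, Real.dist_eq, abs_sub_comm]
    exact h₂.trans_lt hy

theorem ball_prod_ball_half_subset_prodL2Ball (x : α × ℝ) {R : ℝ} (hR : 0 < R) :
    ball x.1 (R / 2) ×ˢ ball x.2 (R / 2) ⊆ prodL2Ball x R := by
  rintro ⟨y₁, y₂⟩ ⟨h₁, h₂⟩
  rw [mem_ball, dist_comm] at h₁
  rw [mem_ball, Real.dist_eq, abs_sub_comm] at h₂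
  have hsq : dist x.1 y₁ ^ 2 + |x.2 - y₂| ^ 2 < R ^ 2 := by
    nlinarith [dist_nonneg (x := x.1) (y := y₁), abs_nonneg (x.2 - y₂)]
  calc Real.sqrt (dist x.1 y₁ ^ 2 + |x.2 - y₂| ^ 2) < Real.sqrt (R ^ 2) :=
        Real.sqrt_lt_sqrt (by positivity) hsq
    _ = R := Real.sqrt_sq hR.le

end Balls

section Measures

variable {α : Type*} [PseudoMetricSpace α] [MeasurableSpace α] (μ : Measure α)

theorem prod_volume_prodL2Ball_le (x : α × ℝ) (R : ℝ) :
    (μ.prod volume) (prodL2Ball x R) ≤ μ (ball x.1 R) * ENNReal.ofReal (2 * R) :=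
  calc (μ.prod volume) (prodL2Ball x R)
      ≤ (μ.prod volume) (ball x.1 R ×ˢ ball x.2 R) :=
        measure_mono (prodL2Ball_subset_ball_prod_ball x R)
    _ ≤ μ (ball x.1 R) * volume (ball x.2 R) := Measure.prod_prod_le _ _
    _ = μ (ball x.1 R) * ENNReal.ofReal (2 * R) := by rw [Real.volume_ball]

theorem measure_ball_mul_le_prod_volume_prodL2Ball (x : α × ℝ) {r R : ℝ} (hR : 0 < R)
    (hr : r ≤ R / 2) :
    μ (ball x.1 r) * ENNReal.ofReal R ≤ (μ.prod volume) (prodL2Ball x R) :=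
  calc μ (ball x.1 r) * ENNReal.ofReal R
      ≤ μ (ball x.1 (R / 2)) * volume (ball x.2 (R / 2)) := by
        rw [Real.volume_ball, mul_div_cancel₀ R two_ne_zero]
        gcongr
    _ = (μ.prod volume) (ball x.1 (R / 2) ×ˢ ball x.2 (R / 2)) := (Measure.prod_prod _ _).symm
    _ ≤ (μ.prod volume) (prodL2Ball x R) :=
        measure_mono (ball_prod_ball_half_subset_prodL2Ball x hR)

theorem exists_measure_ball_le_min_pow [IsFiniteMeasure μ] (n : ℕ) {B r₀ : ℝ} (hB : 0 < B)
    (hr₀ : 0 < r₀)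
    (hup : ∀ (p : α) (r : ℝ), 0 < r → r ≤ r₀ → μ (ball p r) ≤ ENNReal.ofReal (B * r ^ n)) :
    ∃ K : ℝ, 0 < K ∧ ∀ (p : α) (s : ℝ), 0 < s →
      μ (ball p s) ≤ ENNReal.ofReal (K * min s r₀ ^ n) := by
  have hmass : 0 ≤ μ.real univ / r₀ ^ n := by positivity
  refine ⟨B + μ.real univ / r₀ ^ n, by positivity, fun p s hs => ?_⟩
  rcases le_total s r₀ with hsr | hrs
  · rw [min_eq_left hsr]
    refine (hup p s hs hsr).trans (ENNReal.ofReal_le_ofReal ?_)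
    gcongr
    linarith
  · rw [min_eq_right hrs, add_mul, div_mul_cancel₀ _ (pow_pos hr₀ n).ne']
    calc μ (ball p s) ≤ μ univ := measure_mono (subset_univ _)
      _ = ENNReal.ofReal (μ.real univ) := (ofReal_measureReal (measure_ne_top μ _)).symm
      _ ≤ ENNReal.ofReal (B * r₀ ^ n + μ.real univ) :=
        ENNReal.ofReal_le_ofReal (le_add_of_nonneg_left (by positivity))

end Measures

theorem min_mul_le_two_mul_min_half {t R r₀ : ℝ} (ht : 1 ≤ t) (hr₀ : 0 ≤ r₀) :
    min (t * R) r₀ ≤ 2 * t * min (R / 2) r₀ := by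
  rw [mul_min_of_nonneg _ _ (by positivity)]
  apply min_le_min (le_of_eq (by ring))
  nlinarith

theorem doubling_ratio_le {n : ℕ} {K A t R r₀ : ℝ} (hK : 0 ≤ K) (hA : 0 < A) (hR : 0 < R)
    (ht : 1 ≤ t) (hr₀ : 0 < r₀) :
    K * min (t * R) r₀ ^ n * (2 * (t * R)) ≤
      K * 2 ^ (n + 1) / A * t ^ (n + 1) * (A * min (R / 2) r₀ ^ n * R) := by
  have hmin : min (t * R) r₀ ^ n ≤ (2 * t) ^ n * min (R / 2) r₀ ^ n := by
    rw [← mul_pow]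
    exact pow_le_pow_left₀ (le_min (by nlinarith) hr₀.le)
      (min_mul_le_two_mul_min_half ht hr₀.le) n
  calc K * min (t * R) r₀ ^ n * (2 * (t * R))
      ≤ K * ((2 * t) ^ n * min (R / 2) r₀ ^ n) * (2 * (t * R)) := by gcongr
    _ = K * 2 ^ (n + 1) / A * t ^ (n + 1) * (A * min (R / 2) r₀ ^ n * R) := by
        field_simp
        ring

theorem product_doubling_general {N : Type*} [MetricSpace N] [MeasurableSpace N]
    (μN : Measure N) [IsFiniteMeasure μN]
    (m : ℕ) (hm : 1 ≤ m) (A₁ B₂ r₀ : ℝ) (hA₁ : 0 < A₁) (hB₂ : 0 < B₂) (hr₀ : 0 < r₀)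
    (hlow : ∀ (p : N) (r : ℝ), 0 < r → r ≤ r₀ →
      ENNReal.ofReal (A₁ * r ^ (m - 1)) ≤ μN (ball p r))
    (hup : ∀ (p : N) (r : ℝ), 0 < r → r ≤ r₀ →
      μN (ball p r) ≤ ENNReal.ofReal (B₂ * r ^ (m - 1))) :
    ∃ C : ℝ, 0 < C ∧
      ∀ (x : N × ℝ) (R t : ℝ), 0 < R → 1 ≤ t →
        (μN.prod volume)
            {y : N × ℝ | Real.sqrt (dist x.1 y.1 ^ 2 + |x.2 - y.2| ^ 2) < t * R} ≤
          ENNReal.ofReal (C * t ^ m) *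
            (μN.prod volume)
              {y : N × ℝ | Real.sqrt (dist x.1 y.1 ^ 2 + |x.2 - y.2| ^ 2) < R} := by
  obtain ⟨n, rfl⟩ : ∃ n, m = n + 1 := ⟨m - 1, (Nat.sub_add_cancel hm).symm⟩
  simp only [Nat.add_sub_cancel] at hlow hup
  obtain ⟨K, hK, hball⟩ := exists_measure_ball_le_min_pow μN n hB₂ hr₀ hup
  refine ⟨K * 2 ^ (n + 1) / A₁, by positivity, fun x R t hR ht => ?_⟩
  have hc : 0 < min (R / 2) r₀ := lt_min (half_pos hR) hr₀
  calc (μN.prod volume) (prodL2Ball x (t * R))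
      ≤ μN (ball x.1 (t * R)) * ENNReal.ofReal (2 * (t * R)) :=
        prod_volume_prodL2Ball_le μN x (t * R)
    _ ≤ ENNReal.ofReal (K * min (t * R) r₀ ^ n) * ENNReal.ofReal (2 * (t * R)) := by
        gcongr
        exact hball _ _ (by nlinarith)
    _ ≤ ENNReal.ofReal (K * 2 ^ (n + 1) / A₁ * t ^ (n + 1)) *
          (ENNReal.ofReal (A₁ * min (R / 2) r₀ ^ n) * ENNReal.ofReal R) := by
        rw [← ENNReal.ofReal_mul (by positivity), ← ENNReal.ofReal_mul (by positivity),
          ← ENNReal.ofReal_mul (by positivity)]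
        exact ENNReal.ofReal_le_ofReal (doubling_ratio_le hK.le hA₁ hR ht hr₀)
    _ ≤ ENNReal.ofReal (K * 2 ^ (n + 1) / A₁ * t ^ (n + 1)) *
          (μN.prod volume) (prodL2Ball x R) := by
        gcongr
        calc ENNReal.ofReal (A₁ * min (R / 2) r₀ ^ n) * ENNReal.ofReal R
            ≤ μN (ball x.1 (min (R / 2) r₀)) * ENNReal.ofReal R := by
              gcongr
              exact hlow _ _ hc (min_le_right _ _)
          _ ≤ (μN.prod volume) (prodL2Ball x R) :=
              measure_ball_mul_le_prod_volume_prodL2Ball μN x hR (min_le_left _ _)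

/-- Doubling estimate on a product `X = N × ℝ`: if `N` is a metric measure space of
finite total measure with two-sided Ahlfors-type bounds
`A₁ r^{m-1} ≤ μ_N(B^N_r(p)) ≤ B₂ r^{m-1}` at small scales `0 < r ≤ r₀`, then the
product measure `μ = μ_N ⊗ Leb` and the ℓ²-product metric on `X` satisfy
`μ(B^X_{tR}(x)) ≤ C t^m μ(B^X_R(x))` for all `x`, `R > 0`, `t ≥ 1`. -/
theorem product_doubling {N : Type*} [MetricSpace N] [MeasurableSpace N]
    [BorelSpace N] (μN : Measure N) [IsFiniteMeasure μN]
    (m : ℕ) (hm : 1 ≤ m) (A₁ B₂ r₀ : ℝ) (hA₁ : 0 < A₁) (hB₂ : 0 < B₂) (hr₀ : 0 < r₀)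
    (hlow : ∀ (p : N) (r : ℝ), 0 < r → r ≤ r₀ →
      ENNReal.ofReal (A₁ * r ^ (m - 1)) ≤ μN (ball p r))
    (hup : ∀ (p : N) (r : ℝ), 0 < r → r ≤ r₀ →
      μN (ball p r) ≤ ENNReal.ofReal (B₂ * r ^ (m - 1))) :
    ∃ C : ℝ, 0 < C ∧
      ∀ (x : N × ℝ) (R t : ℝ), 0 < R → 1 ≤ t →
        (μN.prod volume)
            {y : N × ℝ | Real.sqrt (dist x.1 y.1 ^ 2 + |x.2 - y.2| ^ 2) < t * R} ≤
          ENNReal.ofReal (C * t ^ m) *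
            (μN.prod volume)
              {y : N × ℝ | Real.sqrt (dist x.1 y.1 ^ 2 + |x.2 - y.2| ^ 2) < R} :=
  product_doubling_general μN m hm A₁ B₂ r₀ hA₁ hB₂ hr₀ hlow hup
end
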